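/- Let α0, α1 be complex constants, U an open subset of ℂ with 0 ∉ U, and let (x, y, z) : U → ℂ³ be differentiable functions satisfying system (S) on U with parameters (α0, α1), and suppose y(t) ≠ 0 for all t ∈ U. Then u := x is three times differentiable on U and satisfies equation (E) on U; moreover u' = y and u'' = yz + ((2α1−1)x + α0)/t². -/
import Mathlib


/-- The triple `(x, y, z)` satisfies the polynomial system (S) on `U` with
parameters `(α0, α1)`:
`x′ = y`, `y′ = yz + ((2α1−1)x + α0)/t²`,
`z′ = −z²/2 − 4x/t − 4y − 2z/t + (2α1−1)(2α1−3)/(2t²) + 2/t`. -/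
def SysS (α0 α1 : ℂ) (U : Set ℂ) (x y z : ℂ → ℂ) : Prop :=
  ∀ t ∈ U,
    HasDerivAt x (y t) t ∧
    HasDerivAt y (y t * z t + ((2 * α1 - 1) * x t + α0) / t ^ 2) t ∧
    HasDerivAt z (-(z t) ^ 2 / 2 - 4 * x t / t - 4 * y t - 2 * z t / t
      + (2 * α1 - 1) * (2 * α1 - 3) / (2 * t ^ 2) + 2 / t) t

/-- If `(x, y, z)` satisfies system (S) on `U` with `y ≠ 0`, then `u := x` is
three times differentiable and satisfies equation (E) on `U`, with `u' = y` and
`u'' = yz + ((2α1−1)x + α0)/t²`. -/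
theorem sysS_to_eqE
    (α0 α1 : ℂ) (U : Set ℂ) (hU : IsOpen U) (h0 : (0 : ℂ) ∉ U)
    (x y z : ℂ → ℂ) (h : SysS α0 α1 U x y z)
    (hy : ∀ t ∈ U, y t ≠ 0) :
    ∀ t ∈ U,
      DifferentiableAt ℂ x t ∧
      DifferentiableAt ℂ (deriv x) t ∧
      DifferentiableAt ℂ (deriv (deriv x)) t ∧
      deriv x t = y t ∧
      deriv (deriv x) t = y t * z t + ((2 * α1 - 1) * x t + α0) / t ^ 2 ∧
      deriv (deriv (deriv x)) t =
        (t ^ 2 * deriv (deriv x) t - (2 * α1 - 1) * x t - α0) *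
            (t ^ 2 * deriv (deriv x) t + (2 * α1 - 1) * x t + α0) /
              (2 * t ^ 4 * deriv x t)
          - 4 * deriv x t * (x t + t * deriv x t) / t
          + ((4 * t + (2 * α1 - 1) ^ 2) / (2 * t ^ 2)) * deriv x t
          - (2 / t) * deriv (deriv x) t := by
  intro t ht
  have ht0 : t ≠ 0 := fun h' => h0 (h' ▸ ht)
  obtain ⟨hx, hy', hz⟩ := h t ht
  have hmem : U ∈ nhds t := hU.mem_nhds ht
  -- first derivative agrees with `y` on `U`
  have hdx : ∀ s ∈ U, deriv x s = y s := fun s hs => (h s hs).1.deriv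
  have hEx : deriv x =ᶠ[nhds t] y := Filter.eventuallyEq_of_mem hmem hdx
  -- the candidate second-derivative function and its derivative
  have hW : ∀ s ∈ U, HasDerivAt (fun u => y u * z u + ((2 * α1 - 1) * x u + α0) / u ^ 2)
      ((y s * z s + ((2 * α1 - 1) * x s + α0) / s ^ 2) * z s
        + y s * (-(z s) ^ 2 / 2 - 4 * x s / s - 4 * y s - 2 * z s / s
          + (2 * α1 - 1) * (2 * α1 - 3) / (2 * s ^ 2) + 2 / s)
        + (((2 * α1 - 1) * y s) * s ^ 2
          - ((2 * α1 - 1) * x s + α0) * (2 * s)) / (s ^ 2) ^ 2) s := by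
    intro s hs
    have hs0 : s ≠ 0 := fun h' => h0 (h' ▸ hs)
    have hs2 : (s : ℂ) ^ 2 ≠ 0 := pow_ne_zero _ hs0
    obtain ⟨hxs, hys, hzs⟩ := h s hs
    have h1 := hys.mul hzs
    have h2 : HasDerivAt (fun u => (2 * α1 - 1) * x u + α0) ((2 * α1 - 1) * y s) s :=
      (hxs.const_mul _).add_const _
    have h3 : HasDerivAt (fun u : ℂ => u ^ 2) (2 * s) s := by
      simpa using hasDerivAt_pow 2 s
    exact h1.add (h2.div h3 hs2)
  -- the second derivative agrees with the candidate on `U`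
  have hdw : ∀ s ∈ U, deriv (deriv x) s
      = y s * z s + ((2 * α1 - 1) * x s + α0) / s ^ 2 := by
    intro s hs
    have hEs : deriv x =ᶠ[nhds s] y :=
      Filter.eventuallyEq_of_mem (hU.mem_nhds hs) hdx
    rw [hEs.deriv_eq, (h s hs).2.1.deriv]
  have hEw : deriv (deriv x) =ᶠ[nhds t]
      (fun s => y s * z s + ((2 * α1 - 1) * x s + α0) / s ^ 2) :=
    Filter.eventuallyEq_of_mem hmem hdw
  have hdx_t : deriv x t = y t := hx.deriv
  have hdw_t : deriv (deriv x) t = y t * z t + ((2 * α1 - 1) * x t + α0) / t ^ 2 := hdw t ht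
  refine ⟨hx.differentiableAt, ?_, ?_, hdx_t, hdw_t, ?_⟩
  · exact hEx.differentiableAt_iff.mpr hy'.differentiableAt
  · exact hEw.differentiableAt_iff.mpr (hW t ht).differentiableAt
  · have h3 : deriv (deriv (deriv x)) t
        = deriv (fun s => y s * z s + ((2 * α1 - 1) * x s + α0) / s ^ 2) t := hEw.deriv_eq
    rw [h3, (hW t ht).deriv, hdx_t, hdw_t]
    linear_combination
      ((4 : ℂ) * (y t) ^ 2 + (-1/2 : ℂ) * (y t) ^ 2 * (y t)⁻¹ * (z t) ^ 2 + (-2 : ℂ) * t⁻¹ * (y t) + (-1 : ℂ) * t⁻¹ ^ 2 * (y t) + (2 : ℂ) * t⁻¹ ^ 2 * (y t) * α1 + (-1 : ℂ) * t⁻¹ ^ 2 * (y t) * (y t)⁻¹ * (z t) * α0 + (1 : ℂ) * t⁻¹ ^ 2 * (y t) * (y t)⁻¹ * (x t) * (z t) + (-2 : ℂ) * t⁻¹ ^ 2 * (y t) * (y t)⁻¹ * (x t) * (z t) * α1 + (-2 : ℂ) * t⁻¹ ^ 3 * α0 + (2 : ℂ) * t⁻¹ ^ 3 * (x t) + (-4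 : ℂ) * t⁻¹ ^ 3 * (x t) * α1 + (-1/2 : ℂ) * t⁻¹ ^ 4 * (y t)⁻¹ * α0 ^ 2 + (1 : ℂ) * t⁻¹ ^ 4 * (y t)⁻¹ * (x t) * α0 + (-2 : ℂ) * t⁻¹ ^ 4 * (y t)⁻¹ * (x t) * α0 * α1 + (-1/2 : ℂ) * t⁻¹ ^ 4 * (y t)⁻¹ * (x t) ^ 2 + (2 : ℂ) * t⁻¹ ^ 4 * (y t)⁻¹ * (x t) ^ 2 * α1 + (-2 : ℂ) * t⁻¹ ^ 4 * (y t)⁻¹ * (x t) ^ 2 * α1 ^ 2 + (-1/2 : ℂ) * t * t⁻¹ * (y t) ^ 2 * (y t)⁻¹ * (z t) ^ 2 + (-1 : ℂ) * t * t⁻¹ ^ 3 * (y t) + (2 : ℂ) * t * t⁻¹ ^ 3 * (y t) * α1 + (-1 : ℂ) * t * t⁻¹ ^ 3 * (y t) * (y t)⁻¹ * (z t) * α0 + (1 : ℂ) * t * t⁻¹ ^ 3 * (y t) * (y t)⁻¹ * (x t) * (z t) + (-2 : ℂ) * t * t⁻¹ ^ 3 * (y t) * (y t)⁻¹ * (x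 t) * (z t) * α1 + (-1/2 : ℂ) * t * t⁻¹ ^ 5 * (y t)⁻¹ * α0 ^ 2 + (1 : ℂ) * t * t⁻¹ ^ 5 * (y t)⁻¹ * (x t) * α0 + (-2 : ℂ) * t * t⁻¹ ^ 5 * (y t)⁻¹ * (x t) * α0 * α1 + (-1/2 : ℂ) * t * t⁻¹ ^ 5 * (y t)⁻¹ * (x t) ^ 2 + (2 : ℂ) * t * t⁻¹ ^ 5 * (y t)⁻¹ * (x t) ^ 2 * α1 + (-2 : ℂ) * t * t⁻¹ ^ 5 * (y t)⁻¹ * (x t) ^ 2 * α1 ^ 2 + (-1/2 : ℂ) * t ^ 2 * t⁻¹ ^ 2 * (y t) ^ 2 * (y t)⁻¹ * (z t) ^ 2 + (-1 : ℂ) * t ^ 2 * t⁻¹ ^ 4 * (y t) * (y t)⁻¹ * (z t) * α0 + (1 : ℂ) * t ^ 2 * t⁻¹ ^ 4 * (y t) * (y t)⁻¹ * (x t) * (z t) + (-2 : ℂ) * t ^ 2 * t⁻¹ ^ 4 * (y t) * (y t)⁻¹ * (x t) * (z t) * α1 + (-1/2 : ℂ) * t ^ 2 * t⁻¹ ^ 6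 * (y t)⁻¹ * α0 ^ 2 + (1 : ℂ) * t ^ 2 * t⁻¹ ^ 6 * (y t)⁻¹ * (x t) * α0 + (-2 : ℂ) * t ^ 2 * t⁻¹ ^ 6 * (y t)⁻¹ * (x t) * α0 * α1 + (-1/2 : ℂ) * t ^ 2 * t⁻¹ ^ 6 * (y t)⁻¹ * (x t) ^ 2 + (2 : ℂ) * t ^ 2 * t⁻¹ ^ 6 * (y t)⁻¹ * (x t) ^ 2 * α1 + (-2 : ℂ) * t ^ 2 * t⁻¹ ^ 6 * (y t)⁻¹ * (x t) ^ 2 * α1 ^ 2 + (-1/2 : ℂ) * t ^ 3 * t⁻¹ ^ 3 * (y t) ^ 2 * (y t)⁻¹ * (z t) ^ 2 + (-1 : ℂ) * t ^ 3 * t⁻¹ ^ 5 * (y t) * (y t)⁻¹ * (z t) * α0 + (1 : ℂ) * t ^ 3 * t⁻¹ ^ 5 * (y t) * (y t)⁻¹ * (x t) * (z t) + (-2 : ℂ) * t ^ 3 * t⁻¹ ^ 5 * (y t) * (y t)⁻¹ * (x t) * (z t) * α1 + (-1/2 : ℂ) * t ^ 3 * t⁻¹ ^ 7 * (y t)⁻¹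 * α0 ^ 2 + (1 : ℂ) * t ^ 3 * t⁻¹ ^ 7 * (y t)⁻¹ * (x t) * α0 + (-2 : ℂ) * t ^ 3 * t⁻¹ ^ 7 * (y t)⁻¹ * (x t) * α0 * α1 + (-1/2 : ℂ) * t ^ 3 * t⁻¹ ^ 7 * (y t)⁻¹ * (x t) ^ 2 + (2 : ℂ) * t ^ 3 * t⁻¹ ^ 7 * (y t)⁻¹ * (x t) ^ 2 * α1 + (-2 : ℂ) * t ^ 3 * t⁻¹ ^ 7 * (y t)⁻¹ * (x t) ^ 2 * α1 ^ 2) * mul_inv_cancel₀ ht0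
      + ((-1/2 : ℂ) * (y t) * (z t) ^ 2 + (-1 : ℂ) * t⁻¹ ^ 2 * (z t) * α0 + (1 : ℂ) * t⁻¹ ^ 2 * (x t) * (z t) + (-2 : ℂ) * t⁻¹ ^ 2 * (x t) * (z t) * α1) * mul_inv_cancel₀ (hy t ht)
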